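/- Let (X,p) be a partial metric space, let I be a nontrivial admissible ideal of subsets of ℕ, let r ≥ 0, and let (a_n) and (b_n) be two sequences in X such that p(a_n, b_n) → 0 as n → ∞ and p(a_n, a_n) → 0 as n → ∞. If (b_n) is rough I-convergent to a point a ∈ X of roughness degree r, then (a_n) is rough I-convergent to a of roughness degree r. -/

import Mathlib

/-- A partial metric on `X` (Matthews): nonnegativity with small self-distances,
indistancy implies equality, symmetry, and the modified triangle inequality. -/
structure IsPartialMetric {X : Type*} (p : X → X → ℝ) : Prop where
  self_nonneg : ∀ x : X, 0 ≤ p x x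
  self_le : ∀ x y : X, p x x ≤ p x y
  eq_iff : ∀ x y : X, x = y ↔ (p x x = p x y ∧ p x y = p y y)
  symm : ∀ x y : X, p x y = p y x
  triangle : ∀ x y z : X, p x y ≤ p x z + p z y - p z z

/-- An ideal of subsets of `ℕ`. -/
structure IsIdeal (I : Set (Set ℕ)) : Prop where
  empty_mem : (∅ : Set ℕ) ∈ I
  union_mem : ∀ A B : Set ℕ, A ∈ I → B ∈ I → A ∪ B ∈ I
  subset_mem : ∀ A B : Set ℕ, A ∈ I → B ⊆ A → B ∈ I

/-- A nontrivial admissible ideal of subsets of `ℕ`. -/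
structure IsAdmissibleIdeal (I : Set (Set ℕ)) extends IsIdeal I : Prop where
  univ_not_mem : (Set.univ : Set ℕ) ∉ I
  ne_empty_singleton : I ≠ {∅}
  singleton_mem : ∀ n : ℕ, ({n} : Set ℕ) ∈ I

/-- `(x n)` is rough `I`-convergent to `x₀` of roughness degree `r` w.r.t. the
partial metric `p`. -/
def RoughIdealConv {X : Type*} (I : Set (Set ℕ)) (p : X → X → ℝ)
    (x : ℕ → X) (r : ℝ) (x₀ : X) : Prop :=
  ∀ ε : ℝ, 0 < ε → {n : ℕ | r + ε ≤ |p (x n) x₀ - p x₀ x₀|} ∈ I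


/-!
The modified triangle inequality makes `x ↦ p x x₀` `1`-Lipschitz for `p` itself:
`|p x x₀ - p y x₀| ≤ p x y`. Hence once `p (aₙ, bₙ) < ε / 2`, a deviation of at least `r + ε`
for `aₙ` forces a deviation of at least `r + ε / 2` for `bₙ`. The indices where this fails
form a finite set, which an admissible ideal contains.
-/

open Filter

theorem IsPartialMetric.abs_sub_le {X : Type*} {p : X → X → ℝ} (hp : IsPartialMetric p)
    (x y z : X) : |p x z - p y z| ≤ p x y := by
  have hxy := hp.triangle x z y
  have hyx := hp.triangle y z x
  have hx := hp.self_nonneg x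
  have hy := hp.self_nonneg y
  rw [hp.symm y x] at hyx
  rw [abs_le]
  constructor <;> linarith

namespace IsAdmissibleIdeal

variable {I : Set (Set ℕ)}

theorem mem_of_finite (hI : IsAdmissibleIdeal I) {s : Set ℕ} (hs : s.Finite) : s ∈ I := by
  induction s, hs using Set.Finite.induction_on with
  | empty => exact hI.empty_mem
  | @insert n s _ _ ih =>
    rw [Set.insert_eq]
    exact hI.union_mem _ _ (hI.singleton_mem n) ih

theorem mem_of_eventually_imp (hI : IsAdmissibleIdeal I) {A B : Set ℕ} (hA : A ∈ I)
    (hBA : ∀ᶠ n in atTop, n ∈ B → n ∈ A) : B ∈ I := by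
  obtain ⟨N, hN⟩ := eventually_atTop.mp hBA
  refine hI.subset_mem _ _ (hI.union_mem _ _ hA (hI.mem_of_finite (Set.finite_Iio N))) ?_
  intro n hn
  by_cases hnN : N ≤ n
  · exact Or.inl (hN n hnN hn)
  · exact Or.inr (not_le.mp hnN)

end IsAdmissibleIdeal

theorem rough_ideal_conv_transfer_back_general
    {X : Type*} (p : X → X → ℝ) (hp : IsPartialMetric p)
    (I : Set (Set ℕ)) (hI : IsAdmissibleIdeal I)
    (r : ℝ) (a b : ℕ → X)
    (hab : Filter.Tendsto (fun n => p (a n) (b n)) Filter.atTop (nhds 0))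
    (x₀ : X) (hb : RoughIdealConv I p b r x₀) :
    RoughIdealConv I p a r x₀ := by
  intro ε hε
  refine hI.mem_of_eventually_imp (hb (ε / 2) (half_pos hε)) ?_
  filter_upwards [hab.eventually (gt_mem_nhds (half_pos hε))] with n hclose hfar
  have hab_n := hp.abs_sub_le (a n) (b n) x₀
  have htri := abs_sub_le (p (a n) x₀) (p (b n) x₀) (p x₀ x₀)
  linarith

theorem rough_ideal_conv_transfer_back
    {X : Type*} [Nonempty X] (p : X → X → ℝ) (hp : IsPartialMetric p)
    (I : Set (Set ℕ)) (hI : IsAdmissibleIdeal I)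
    (r : ℝ) (hr : 0 ≤ r) (a b : ℕ → X)
    (hab : Filter.Tendsto (fun n => p (a n) (b n)) Filter.atTop (nhds 0))
    (haa : Filter.Tendsto (fun n => p (a n) (a n)) Filter.atTop (nhds 0))
    (x₀ : X) (hb : RoughIdealConv I p b r x₀) :
    RoughIdealConv I p a r x₀ :=
  rough_ideal_conv_transfer_back_general p hp I hI r a b hab x₀ hb
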